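/- arXiv:1901.00112 — 2 statements merged into one kernel-verified Lean document; each statement's English description precedes it below -/
import Mathlib

section
/- For every c in F there exists exactly one pair (ψ, η) in E × F such that ⟪ψ, v⟫_E + ⟪η, L v⟫_F = 0 for all v in E and L ψ = c. -/
open RealInnerProductSpace

/-- Unique solvability of the mixed saddle-point problem: for every `c` in `F` there is
exactly one pair `(ψ, η)` with `⟪ψ, v⟫ + ⟪η, L v⟫ = 0` for all `v` and `L ψ = c`. -/
theorem mixed_saddle_point_exists_unique
    {E F : Type*} [NormedAddCommGroup E] [InnerProductSpace ℝ E] [FiniteDimensional ℝ E]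
    [NormedAddCommGroup F] [InnerProductSpace ℝ F] [FiniteDimensional ℝ F]
    (L : E →ₗ[ℝ] F) (hL : Function.Surjective L) (c : F) :
    ∃! p : E × F, (∀ v : E, ⟪p.1, v⟫ + ⟪p.2, L v⟫ = 0) ∧ L p.1 = c := by
  set A := LinearMap.adjoint L with hA
  have hadj : ∀ (y : F) (v : E), ⟪A y, v⟫ = ⟪y, L v⟫ := fun y v =>
    LinearMap.adjoint_inner_left L v y
  -- adjoint is injective since L is surjective
  have hAinj : Function.Injective A := by
    intro x y hxy
    have h : ∀ v : E, ⟪x - y, L v⟫ = 0 := by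
      intro v
      rw [← hadj, map_sub, hxy, sub_self, inner_zero_left]
    obtain ⟨v, hv⟩ := hL (x - y)
    have := h v
    rw [hv, inner_self_eq_zero, sub_eq_zero] at this
    exact this
  set M := L ∘ₗ A with hM
  have hMinj : Function.Injective M := by
    intro x y hxy
    apply hAinj
    have hxy' : L (A x) = L (A y) := hxy
    have h : ⟪A x - A y, A x - A y⟫ = 0 := by
      rw [inner_sub_right, inner_sub_left, inner_sub_left, hadj, hadj, hadj, hadj, hxy']
      ring
    rw [inner_self_eq_zero, sub_eq_zero] at h
    exact h
  have hMsurj : Function.Surjective M :=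
    (LinearMap.injective_iff_surjective).mp hMinj
  obtain ⟨η, hη⟩ := hMsurj (-c)
  have hη' : L (A η) = -c := hη
  refine ⟨(-(A η), η), ⟨?_, ?_⟩, ?_⟩
  · intro v
    show ⟪-(A η), v⟫ + ⟪η, L v⟫ = 0
    rw [inner_neg_left, hadj]
    ring
  · show L (-(A η)) = c
    rw [map_neg, hη', neg_neg]
  · rintro ⟨ψ, μ⟩ ⟨h1, h2⟩
    have hψ : ψ = -(A μ) := by
      have h : ∀ v : E, ⟪ψ + A μ, v⟫ = 0 := by
        intro v
        rw [inner_add_left, hadj]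
        exact h1 v
      have := h (ψ + A μ)
      rw [inner_self_eq_zero] at this
      rw [eq_neg_iff_add_eq_zero]
      exact this
    have hμ : μ = η := by
      apply hMinj
      show L (A μ) = L (A η)
      have h2' : L ψ = c := h2
      rw [hψ, map_neg] at h2'
      have : L (A μ) = -c := neg_eq_iff_eq_neg.mp h2'
      rw [this, hη']
    simp [hψ, hμ]
end

section
/- Let (e_j)_{j=1,…,dim F} be a basis of F and, for each j, let ψ_j be the unique element of E satisfying ⟪ψ_j, v⟫_E + ⟪L ψ_j, L v⟫_F = ⟪e_j, L v⟫_F for all v in E. Then E is the internal direct sum of ker L and span{ψ_1, …, ψ_{dim F}}. -/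
open RealInnerProductSpace LinearMap Module

/- The relaxed Euler–Lagrange equation reads `(1 + L* L) ψ = L* f`, so it is linear in `(ψ, f)`,
every solution `ψ` is orthogonal to `ker L`, and, `L*` being injective for surjective `L`,
`ψ = 0` forces `f = 0`. Hence the `ψ j` are as linearly independent as the `e j`: they span a
subspace of dimension `dim F` meeting `ker L` trivially, which is therefore a complement of
`ker L`. -/

theorem isCompl_ker_of_disjoint_of_finrank_eq {K V W : Type*} [Field K] [AddCommGroup V]
    [Module K V] [AddCommGroup W] [Module K W] [FiniteDimensional K W] (f : V →ₗ[K] W)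
    (hf : Function.Surjective f) {p : Submodule K V} [FiniteDimensional K p]
    (hdisj : Disjoint (ker f) p) (hrank : finrank K p = finrank K W) : IsCompl (ker f) p := by
  have hinj : Function.Injective (f.domRestrict p) := by
    rwa [← ker_eq_bot, ker_domRestrict, ← Submodule.disjoint_iff_comap_eq_bot, disjoint_comm]
  have hmap : p.map f = ⊤ := by
    rw [← range_domRestrict]
    exact Submodule.eq_top_of_finrank_eq ((finrank_range_of_inj hinj).trans hrank)
  refine ⟨hdisj, codisjoint_iff.mpr ?_⟩
  rw [sup_comm, ← map_eq_top_iff (range_eq_top.mpr hf)]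
  exact hmap

section RelaxedSolutions

variable {E F : Type*} [NormedAddCommGroup E] [InnerProductSpace ℝ E]
  [NormedAddCommGroup F] [InnerProductSpace ℝ F] (L : E →ₗ[ℝ] F)

/-- `(ψ, f) ∈ relaxedSolutions L` means that `ψ` solves the relaxed Euler–Lagrange
equation (2.9) with right-hand side `f`. -/
def relaxedSolutions : Submodule ℝ (E × F) where
  carrier := {p | ∀ v, ⟪p.1, v⟫ + ⟪L p.1, L v⟫ = ⟪p.2, L v⟫}
  add_mem' {p q} hp hq v := by
    simp only [Set.mem_ofPred_eq, Prod.fst_add, Prod.snd_add, map_add, inner_add_left] at *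
    rw [← hp v, ← hq v]
    ring
  zero_mem' v := by simp
  smul_mem' c p hp v := by
    simp only [Set.mem_ofPred_eq, Prod.smul_fst, Prod.smul_snd, map_smul,
      real_inner_smul_left] at *
    rw [← hp v]
    ring

theorem mem_relaxedSolutions {p : E × F} :
    p ∈ relaxedSolutions L ↔ ∀ v, ⟪p.1, v⟫ + ⟪L p.1, L v⟫ = ⟪p.2, L v⟫ :=
  Iff.rfl

theorem fst_mem_orthogonal_ker_of_mem_relaxedSolutions {p : E × F}
    (hp : p ∈ relaxedSolutions L) : p.1 ∈ (ker L)ᗮ := by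
  intro v hv
  have := (mem_relaxedSolutions L).mp hp v
  rwa [mem_ker.mp hv, inner_zero_right, inner_zero_right, add_zero, real_inner_comm] at this

theorem snd_eq_zero_of_mem_relaxedSolutions (hL : Function.Surjective L) {p : E × F}
    (hp : p ∈ relaxedSolutions L) (hp₁ : p.1 = 0) : p.2 = 0 := by
  obtain ⟨v, hv⟩ := hL p.2
  have := (mem_relaxedSolutions L).mp hp v
  rwa [hp₁, map_zero, inner_zero_left, inner_zero_left, add_zero, hv, eq_comm,
    inner_self_eq_zero] at this

theorem linearIndependent_of_mem_relaxedSolutions (hL : Function.Surjective L) {ι : Type*}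
    {ψ : ι → E} {e : ι → F} (he : LinearIndependent ℝ e)
    (hψ : ∀ j, (ψ j, e j) ∈ relaxedSolutions L) : LinearIndependent ℝ ψ := by
  let S := relaxedSolutions L
  let φ : ι → S := fun j ↦ ⟨(ψ j, e j), hψ j⟩
  have hφ : LinearIndependent ℝ φ := LinearIndependent.of_comp ((snd ℝ E F).comp S.subtype) he
  have hfst : ker ((fst ℝ E F).comp S.subtype) = ⊥ := by
    refine ker_eq_bot'.mpr fun p hp ↦ Subtype.ext (Prod.ext hp ?_)
    exact snd_eq_zero_of_mem_relaxedSolutions L hL p.2 hp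
  exact hφ.map' _ hfst

end RelaxedSolutions

theorem ker_isCompl_span_relaxed_minimizers_general
    {E F : Type*} [NormedAddCommGroup E] [InnerProductSpace ℝ E]
    [NormedAddCommGroup F] [InnerProductSpace ℝ F]
    (L : E →ₗ[ℝ] F) (hL : Function.Surjective L)
    (e : Module.Basis (Fin (Module.finrank ℝ F)) ℝ F)
    (ψ : Fin (Module.finrank ℝ F) → E)
    (hψ : ∀ j, ∀ v : E, ⟪ψ j, v⟫ + ⟪L (ψ j), L v⟫ = ⟪e j, L v⟫) :
    IsCompl (LinearMap.ker L) (Submodule.span ℝ (Set.range ψ)) := by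
  have := e.finiteDimensional_of_finite
  have := FiniteDimensional.span_of_finite ℝ (Set.finite_range ψ)
  have hsol : ∀ j, (ψ j, e j) ∈ relaxedSolutions L := hψ
  have hspan : Submodule.span ℝ (Set.range ψ) ≤ (ker L)ᗮ :=
    Submodule.span_le.mpr <| Set.range_subset_iff.mpr fun j ↦
      fst_mem_orthogonal_ker_of_mem_relaxedSolutions L (hsol j)
  have hψli : LinearIndependent ℝ ψ :=
    linearIndependent_of_mem_relaxedSolutions L hL e.linearIndependent hsol
  refine isCompl_ker_of_disjoint_of_finrank_eq L hL
    ((ker L).orthogonal_disjoint.mono_right hspan) ?_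
  rw [finrank_span_eq_card hψli, Fintype.card_fin]

/-- If, for a basis `(e j)` of `F`, `ψ j` satisfies the relaxed Euler–Lagrange equation
`⟪ψ j, v⟫ + ⟪L (ψ j), L v⟫ = ⟪e j, L v⟫` for all `v`, then `E` is the internal direct
sum of `ker L` and the span of the `ψ j`. -/
theorem ker_isCompl_span_relaxed_minimizers
    {E F : Type*} [NormedAddCommGroup E] [InnerProductSpace ℝ E] [FiniteDimensional ℝ E]
    [NormedAddCommGroup F] [InnerProductSpace ℝ F] [FiniteDimensional ℝ F]
    (L : E →ₗ[ℝ] F) (hL : Function.Surjective L)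
    (e : Module.Basis (Fin (Module.finrank ℝ F)) ℝ F)
    (ψ : Fin (Module.finrank ℝ F) → E)
    (hψ : ∀ j, ∀ v : E, ⟪ψ j, v⟫ + ⟪L (ψ j), L v⟫ = ⟪e j, L v⟫) :
    IsCompl (LinearMap.ker L) (Submodule.span ℝ (Set.range ψ)) :=
  ker_isCompl_span_relaxed_minimizers_general L hL e ψ hψ
end
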